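/- Let D be a k×k Metzler matrix, c > 0, and ξ ∈ ℝ^k a positive right eigenvector of D with D ξ = 0 (critical case μ = 0); set ξ̄ = max_i ξ_i. Let u : [0,∞) → ℝ^k be a nonnegative solution of the cumulant system with u_0 = λ ∈ ℝ^k, λ ≥ 0, and C_0 = max_i λ_i/ξ_i. Then for all t ≥ 0, componentwise: 0 ≤ e^{Dt} λ − u_t ≤ (c ξ̄ / 2) C_0 t · e^{Dt} λ, where e^{Dt} is the matrix exponential. -/

import Mathlib

/-!
Along `r ↦ e^{(t-r)D} u_r` the linear part of the cumulant system cancels (Duhamel), leaving the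
derivative `-(c/2) e^{(t-r)D} (u_r ⊙ u_r)`. A Metzler matrix is a nonnegative matrix shifted by a
multiple of the identity, so `e^{sD} ≥ 0` entrywise for `s ≥ 0` and this derivative is `≤ 0`,
which gives `u_t ≤ e^{tD} λ`. Since `e^{tD} ξ = ξ` and `λ ≤ C₀ ξ`, positivity of `e^{tD}` then
bounds `u_t ≤ C₀ ξ ≤ C₀ ξ̄`, so `u_r ⊙ u_r ≤ C₀ ξ̄ u_r` and the derivative is at least
`-(c/2) C₀ ξ̄ e^{tD} λ`; the mean value inequality on `[0, t]` gives the upper bound.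
-/

open NormedSpace Matrix

namespace Matrix

variable {n : Type*} [Fintype n] [DecidableEq n]

section

attribute [local instance] Matrix.linftyOpNormedRing Matrix.linftyOpNormedAlgebra

theorem exp_apply_nonneg {A : Matrix n n ℝ} (hA : ∀ i j, 0 ≤ A i j) (i j : n) :
    0 ≤ exp A i j :=
  (Pi.hasSum.mp (Pi.hasSum.mp (exp_series_hasSum_exp' (𝕂 := ℝ) A) i) j).nonneg fun m =>
    mul_nonneg (by positivity) (pow_apply_nonneg hA m i j)

theorem exp_mulVec_of_mulVec_eq_zero {A : Matrix n n ℝ} {ξ : n → ℝ} (h : A *ᵥ ξ = 0) :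
    exp A *ᵥ ξ = ξ := by
  have hsum := (exp_series_hasSum_exp' (𝕂 := ℝ) A).map (mulVec.addMonoidHomLeft ξ)
    (continuous_id.matrix_mulVec continuous_const)
  have hsingle : HasSum (fun m : ℕ => ((m.factorial : ℝ)⁻¹ • A ^ m) *ᵥ ξ) ξ := by
    convert hasSum_single (f := fun m : ℕ => ((m.factorial : ℝ)⁻¹ • A ^ m) *ᵥ ξ) 0 ?_
    · simp
    · intro m hm
      obtain ⟨m, rfl⟩ := Nat.exists_eq_succ_of_ne_zero hm
      rw [smul_mulVec, pow_succ, ← mulVec_mulVec, h, mulVec_zero, smul_zero]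
  exact hsum.unique hsingle

theorem hasDerivAt_exp_sub_smul_mulVec (D : Matrix n n ℝ) {u : ℝ → n → ℝ} {u' : n → ℝ}
    {s : ℝ} (t : ℝ) (hu : HasDerivAt u u' s) :
    HasDerivAt (fun r => exp ((t - r) • D) *ᵥ u r) (exp ((t - s) • D) *ᵥ (u' - D *ᵥ u s)) s := by
  let B : Matrix n n ℝ →L[ℝ] (n → ℝ) →L[ℝ] n → ℝ :=
    ((LinearMap.toContinuousLinearMap : ((n → ℝ) →ₗ[ℝ] n → ℝ) ≃ₗ[ℝ] _).toLinearMap ∘ₗ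
      mulVecBilin ℝ ℝ).toContinuousLinearMap
  have hE : HasDerivAt (fun r => exp ((t - r) • D)) (-(D * exp ((t - s) • D))) s := by
    have := (hasDerivAt_exp_smul_const' (𝕂 := ℝ) D (t - s)).scomp s
      ((hasDerivAt_id s).const_sub t)
    simp only [Function.comp_def, neg_smul, one_smul] at this
    exact this
  refine (B.hasDerivAt_of_bilinear (fun _ => hE) (fun _ => hu)).congr_deriv ?_
  change exp ((t - s) • D) *ᵥ u' + (-(D * exp ((t - s) • D))) *ᵥ u s = _
  rw [((Commute.refl D).smul_right (t - s)).exp_right.eq, neg_mulVec, ← mulVec_mulVec,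
    mulVec_sub, sub_eq_add_neg (exp _ *ᵥ u')]

end

theorem exp_smul_mul_exp_smul (D : Matrix n n ℝ) (a b : ℝ) :
    exp (a • D) * exp (b • D) = exp ((a + b) • D) := by
  rw [add_smul, exp_add_of_commute _ _ (((Commute.refl D).smul_left a).smul_right b)]

theorem exp_smul_apply_nonneg_of_metzler {D : Matrix n n ℝ} (hD : ∀ i j, i ≠ j → 0 ≤ D i j)
    {s : ℝ} (hs : 0 ≤ s) (i j : n) : 0 ≤ exp (s • D) i j := by
  obtain ⟨α, hα⟩ : ∃ α : ℝ, ∀ l, 0 ≤ D l l + α :=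
    ⟨∑ l, |D l l|, fun l => by
      linarith [neg_abs_le (D l l), Finset.single_le_sum (fun l _ => abs_nonneg (D l l))
        (Finset.mem_univ l)]⟩
  set B := s • (D + scalar n α)
  have hB : ∀ i j, 0 ≤ B i j := by
    intro i j
    rcases eq_or_ne i j with rfl | hij
    · simpa [B, mul_add] using mul_nonneg hs (hα i)
    · simpa [B, hij] using mul_nonneg hs (hD i j hij)
  have hsplit : s • D = B + scalar n (-(s * α)) := by
    ext i j
    rcases eq_or_ne i j with rfl | hij <;> simp [B, *]
  rw [hsplit, exp_add_of_commute _ _ (scalar_commute _ (Commute.all _) B).symm, scalar_apply,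
    exp_diagonal, mul_diagonal, Pi.coe_exp, ← Real.exp_eq_exp_ℝ]
  exact mul_nonneg (exp_apply_nonneg hB i j) (Real.exp_pos _).le

omit [DecidableEq n] in
theorem mulVec_nonneg_of_nonneg {P : Matrix n n ℝ} (hP : ∀ i j, 0 ≤ P i j) {v : n → ℝ}
    (hv : 0 ≤ v) : 0 ≤ P *ᵥ v :=
  fun i => dotProduct_nonneg_of_nonneg (hP i) hv

omit [DecidableEq n] in
theorem mulVec_mono_of_nonneg {P : Matrix n n ℝ} (hP : ∀ i j, 0 ≤ P i j) {v w : n → ℝ}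
    (h : v ≤ w) : P *ᵥ v ≤ P *ᵥ w :=
  fun i => dotProduct_le_dotProduct_of_nonneg_left h (hP i)

end Matrix

theorem image_le_image_of_hasDerivAt_nonneg {f f' : ℝ → ℝ} {a b : ℝ} (hab : a ≤ b)
    (hf : ∀ x ∈ Set.Icc a b, HasDerivAt f (f' x) x) (hf' : ∀ x ∈ Set.Ioo a b, 0 ≤ f' x) :
    f a ≤ f b :=
  monotoneOn_of_hasDerivWithinAt_nonneg (convex_Icc a b)
    (fun x hx => (hf x hx).continuousAt.continuousWithinAt)
    (fun x hx => (hf x (interior_subset hx)).hasDerivWithinAt) (by simpa only [interior_Icc])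
    (Set.left_mem_Icc.2 hab) (Set.right_mem_Icc.2 hab) hab

section CumulantSystem

variable {n : Type*} [Fintype n] [DecidableEq n] {c : ℝ} {D : Matrix n n ℝ} {u : ℝ → n → ℝ}

theorem hasDerivAt_exp_sub_smul_mulVec_of_cumulant (t : ℝ) {s : ℝ}
    (hu : HasDerivAt u (D *ᵥ u s - (c / 2) • (u s * u s)) s) :
    HasDerivAt (fun r => exp ((t - r) • D) *ᵥ u r)
      (-(c / 2) • (exp ((t - s) • D) *ᵥ (u s * u s))) s := by
  simpa [mulVec_smul, mulVec_neg] using hasDerivAt_exp_sub_smul_mulVec D t hu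

variable (hD : ∀ i j, i ≠ j → 0 ≤ D i j) (hc : 0 ≤ c)
  (hsol : ∀ t ∈ Set.Ici (0 : ℝ), HasDerivAt u (D *ᵥ u t - (c / 2) • (u t * u t)) t)
  (hnonneg : ∀ t ∈ Set.Ici (0 : ℝ), 0 ≤ u t)
include hD hc hsol hnonneg

theorem le_exp_smul_mulVec_of_cumulant {t : ℝ} (ht : 0 ≤ t) : u t ≤ exp (t • D) *ᵥ u 0 := by
  intro i
  have hderiv : ∀ s ∈ Set.Icc 0 t, HasDerivAt (fun r => -(exp ((t - r) • D) *ᵥ u r) i)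
      ((c / 2) * (exp ((t - s) • D) *ᵥ (u s * u s)) i) s := fun s hs => by
    refine (hasDerivAt_pi.mp (hasDerivAt_exp_sub_smul_mulVec_of_cumulant t
      (hsol s hs.1)) i).neg.congr_deriv ?_
    simp
  have hmono := image_le_image_of_hasDerivAt_nonneg ht hderiv fun s hs =>
    mul_nonneg (by positivity) (mulVec_nonneg_of_nonneg
      (exp_smul_apply_nonneg_of_metzler hD (sub_nonneg.2 hs.2.le))
      (mul_nonneg (hnonneg s hs.1.le) (hnonneg s hs.1.le)) i)
  simpa using hmono

theorem le_smul_of_cumulant {ξ : n → ℝ} (hξ : D *ᵥ ξ = 0) {C : ℝ} (h0 : u 0 ≤ C • ξ) {t : ℝ}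
    (ht : 0 ≤ t) : u t ≤ C • ξ :=
  calc u t ≤ exp (t • D) *ᵥ u 0 := le_exp_smul_mulVec_of_cumulant hD hc hsol hnonneg ht
    _ ≤ exp (t • D) *ᵥ (C • ξ) :=
      mulVec_mono_of_nonneg (exp_smul_apply_nonneg_of_metzler hD ht) h0
    _ = C • ξ := by
      rw [mulVec_smul, exp_mulVec_of_mulVec_eq_zero (by rw [smul_mulVec, hξ, smul_zero])]

theorem exp_smul_mulVec_sub_le_of_cumulant {b : ℝ} (hb : ∀ s ∈ Set.Ici (0 : ℝ), ∀ j, u s j ≤ b)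
    {t : ℝ} (ht : 0 ≤ t) :
    exp (t • D) *ᵥ u 0 - u t ≤ (c / 2 * b * t) • (exp (t • D) *ᵥ u 0) := by
  intro i
  set M := (exp (t • D) *ᵥ u 0) i
  have hb₀ : 0 ≤ b := (hnonneg 0 Set.self_mem_Ici i).trans (hb 0 Set.self_mem_Ici i)
  have hsq : ∀ s ∈ Set.Icc 0 t, (exp ((t - s) • D) *ᵥ (u s * u s)) i ≤ b * M := by
    intro s hs
    have hE := exp_smul_apply_nonneg_of_metzler hD (sub_nonneg.2 hs.2)
    have hvec : exp ((t - s) • D) *ᵥ (u s * u s) ≤ b • (exp (t • D) *ᵥ u 0) :=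
      calc exp ((t - s) • D) *ᵥ (u s * u s) ≤ exp ((t - s) • D) *ᵥ (b • u s) :=
            mulVec_mono_of_nonneg hE fun j =>
              mul_le_mul_of_nonneg_right (hb s hs.1 j) (hnonneg s hs.1 j)
        _ ≤ b • (exp ((t - s) • D) *ᵥ (exp (s • D) *ᵥ u 0)) := by
            rw [mulVec_smul]
            exact smul_le_smul_of_nonneg_left (mulVec_mono_of_nonneg hE
              (le_exp_smul_mulVec_of_cumulant hD hc hsol hnonneg hs.1)) hb₀
        _ = b • (exp (t • D) *ᵥ u 0) := by
            rw [mulVec_mulVec, exp_smul_mul_exp_smul, sub_add_cancel]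
    exact hvec i
  have hderiv : ∀ s ∈ Set.Icc 0 t,
      HasDerivAt (fun r => (exp ((t - r) • D) *ᵥ u r) i + c / 2 * b * M * r)
        (-(c / 2) * (exp ((t - s) • D) *ᵥ (u s * u s)) i + c / 2 * b * M) s := fun s hs => by
    refine ((hasDerivAt_pi.mp (hasDerivAt_exp_sub_smul_mulVec_of_cumulant t
      (hsol s hs.1)) i).add ((hasDerivAt_id s).const_mul (c / 2 * b * M))).congr_deriv ?_
    simp
  have hmono := image_le_image_of_hasDerivAt_nonneg ht hderiv fun s hs => by
    nlinarith [hsq s (Set.Ioo_subset_Icc_self hs)]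
  simp only [sub_zero, sub_self, zero_smul, exp_zero, one_mulVec, mul_zero, add_zero] at hmono
  simp only [Pi.sub_apply, Pi.smul_apply, smul_eq_mul]
  linarith

end CumulantSystem

theorem stmt6_general (k : ℕ) (c : ℝ) (hc : 0 < c)
    (D : Matrix (Fin k) (Fin k) ℝ)
    (hMetzler : ∀ i j : Fin k, i ≠ j → 0 ≤ D i j)
    (ξ : Fin k → ℝ) (hξpos : ∀ i, 0 < ξ i)
    (heig : D.mulVec ξ = 0)
    (lam : Fin k → ℝ)
    (u : ℝ → Fin k → ℝ)
    (hsol : ∀ t ∈ Set.Ici (0 : ℝ),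
      HasDerivAt u (D.mulVec (u t) - (c / 2) • (u t * u t)) t)
    (hnonneg : ∀ t ∈ Set.Ici (0 : ℝ), ∀ i : Fin k, 0 ≤ u t i)
    (hinit : u 0 = lam)
    (C₀ ξmax : ℝ) (hC₀ : C₀ = ⨆ i, lam i / ξ i) (hξmax : ξmax = ⨆ i, ξ i) :
    ∀ t ≥ (0 : ℝ), ∀ i : Fin k,
      0 ≤ ((NormedSpace.exp (t • D)).mulVec lam) i - u t i ∧
      ((NormedSpace.exp (t • D)).mulVec lam) i - u t i ≤
        c * ξmax / 2 * C₀ * t * ((NormedSpace.exp (t • D)).mulVec lam) i := by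
  subst hinit
  intro t ht i
  have hbdd := (Set.finite_range fun j => u 0 j / ξ j).bddAbove
  have hlam : u 0 ≤ C₀ • ξ := fun j =>
    (div_le_iff₀ (hξpos j)).1 (hC₀ ▸ le_ciSup hbdd j)
  have hC₀_nonneg : 0 ≤ C₀ :=
    hC₀ ▸ (div_nonneg (hnonneg 0 Set.self_mem_Ici i) (hξpos i).le).trans (le_ciSup hbdd i)
  have hbound : ∀ s ∈ Set.Ici (0 : ℝ), ∀ j, u s j ≤ C₀ * ξmax :=
    fun s hs j => (le_smul_of_cumulant hMetzler hc.le hsol hnonneg heig hlam hs j).trans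
      (mul_le_mul_of_nonneg_left (hξmax ▸ le_ciSup (Set.finite_range ξ).bddAbove j) hC₀_nonneg)
  have hdefect := exp_smul_mulVec_sub_le_of_cumulant hMetzler hc.le hsol hnonneg hbound ht i
  simp only [Pi.sub_apply, Pi.smul_apply, smul_eq_mul] at hdefect
  exact ⟨sub_nonneg.2 (le_exp_smul_mulVec_of_cumulant hMetzler hc.le hsol hnonneg ht i),
    hdefect.trans_eq (by ring)⟩

/-- (Inequality (2.18) of the paper, critical case.) For a nonnegative
solution of the cumulant system with `D ξ = 0` (critical case), one has componentwise
`0 ≤ e^{Dt} λ − u_t ≤ (c ξ̄ / 2) C₀ t e^{Dt} λ`. -/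
theorem stmt6 (k : ℕ) (hk : 1 ≤ k) (c : ℝ) (hc : 0 < c)
    (D : Matrix (Fin k) (Fin k) ℝ)
    (hMetzler : ∀ i j : Fin k, i ≠ j → 0 ≤ D i j)
    (ξ : Fin k → ℝ) (hξpos : ∀ i, 0 < ξ i)
    (heig : D.mulVec ξ = 0)
    (lam : Fin k → ℝ) (hlam : ∀ i, 0 ≤ lam i)
    (u : ℝ → Fin k → ℝ)
    (hsol : ∀ t ∈ Set.Ici (0 : ℝ),
      HasDerivAt u (D.mulVec (u t) - (c / 2) • (u t * u t)) t)
    (hnonneg : ∀ t ∈ Set.Ici (0 : ℝ), ∀ i : Fin k, 0 ≤ u t i)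
    (hinit : u 0 = lam)
    (C₀ ξmax : ℝ) (hC₀ : C₀ = ⨆ i, lam i / ξ i) (hξmax : ξmax = ⨆ i, ξ i) :
    ∀ t ≥ (0 : ℝ), ∀ i : Fin k,
      0 ≤ ((NormedSpace.exp (t • D)).mulVec lam) i - u t i ∧
      ((NormedSpace.exp (t • D)).mulVec lam) i - u t i ≤
        c * ξmax / 2 * C₀ * t * ((NormedSpace.exp (t • D)).mulVec lam) i :=
  stmt6_general k c hc D hMetzler ξ hξpos heig lam u hsol hnonneg hinit C₀ ξmax hC₀ hξmax
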